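/- Let z : ℤ with 6 ≤ |z|, and suppose that the integers 2 + z and 2 - z are not both prime in ℤ. Then in R_z := AdjoinRoot (X^2 - C z * X + 1 : ℤ[X]) there exists an element γ with Irreducible γ and ¬ Prime γ; in particular, R_z is not a unique factorization domain. -/

import Mathlib

open Polynomial

noncomputable abbrev Rz (z : ℤ) : Type :=
  AdjoinRoot (X ^ 2 - C z * X + 1 : ℤ[X])

/-! Auxiliary development -/

noncomputable def rt (z : ℤ) : Rz z := AdjoinRoot.root _

noncomputable def Ae (z a b : ℤ) : Rz z := (a : Rz z) + (b : Rz z) * rt z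

lemma fz_eq (z : ℤ) : (X ^ 2 - C z * X + 1 : ℤ[X]) = X ^ 2 + (C (-z) * X + C 1) := by
  rw [map_neg, map_one]; ring

lemma fz_monic (z : ℤ) : (X ^ 2 - C z * X + 1 : ℤ[X]).Monic := by
  rw [fz_eq]
  exact monic_X_pow_add (degree_linear_le.trans_lt (by decide))

lemma fz_deg (z : ℤ) : (X ^ 2 - C z * X + 1 : ℤ[X]).degree = 2 := by
  have h : (X ^ 2 - C z * X + 1 : ℤ[X]) = C 1 * X ^ 2 + C (-z) * X + C 1 := by
    rw [map_neg, map_one]; ring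
  rw [h]
  exact degree_quadratic one_ne_zero

lemma ofz_eq (z a : ℤ) :
    AdjoinRoot.of (X ^ 2 - C z * X + 1 : ℤ[X]) a = ((a : ℤ) : Rz z) :=
  eq_intCast (AdjoinRoot.of (X ^ 2 - C z * X + 1 : ℤ[X])) a

lemma rootz_eq (z : ℤ) : AdjoinRoot.root (X ^ 2 - C z * X + 1 : ℤ[X]) = rt z := rfl

lemma rt_root (z : ℤ) : (rt z) ^ 2 - (z : Rz z) * rt z + 1 = 0 := by
  have h : AdjoinRoot.mk (X ^ 2 - C z * X + 1 : ℤ[X]) (X ^ 2 - C z * X + 1 : ℤ[X])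
      = (rt z) ^ 2 - (z : Rz z) * rt z + 1 := by
    rw [map_add, map_sub, map_pow, map_mul, map_one, AdjoinRoot.mk_X, AdjoinRoot.mk_C]
    rw [ofz_eq z z, rootz_eq z]
  rw [← h, AdjoinRoot.mk_self]

lemma Ae_mul (z a b c d : ℤ) :
    Ae z a b * Ae z c d = Ae z (a * c - b * d) (a * d + b * c + b * d * z) := by
  unfold Ae
  have h := rt_root z
  push_cast
  linear_combination ((b : Rz z) * (d : Rz z)) * h

lemma Ae_int (z a : ℤ) : ((a : ℤ) : Rz z) = Ae z a 0 := by
  simp [Ae]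

lemma Ae_surj (z : ℤ) (x : Rz z) : ∃ a b : ℤ, x = Ae z a b := by
  obtain ⟨p, rfl⟩ := AdjoinRoot.mk_surjective x
  refine ⟨(p %ₘ (X ^ 2 - C z * X + 1)).coeff 0, (p %ₘ (X ^ 2 - C z * X + 1)).coeff 1, ?_⟩
  have hd : (p %ₘ (X ^ 2 - C z * X + 1)).degree ≤ 1 := by
    have h2 := degree_modByMonic_lt p (fz_monic z)
    rw [fz_deg] at h2
    by_contra hc
    push_neg at hc
    have h3 := Nat.WithBot.add_one_le_of_lt hc
    rw [show ((1 : WithBot ℕ) + 1) = 2 from by norm_num] at h3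
    exact absurd h2 (not_lt.mpr h3)
  have hq := eq_X_add_C_of_degree_le_one hd
  have hrep := modByMonic_add_div p (X ^ 2 - C z * X + 1)
  calc AdjoinRoot.mk (X ^ 2 - C z * X + 1) p
      = AdjoinRoot.mk (X ^ 2 - C z * X + 1)
        (p %ₘ (X ^ 2 - C z * X + 1)
          + (X ^ 2 - C z * X + 1) * (p /ₘ (X ^ 2 - C z * X + 1))) := by rw [hrep]
    _ = AdjoinRoot.mk (X ^ 2 - C z * X + 1) (p %ₘ (X ^ 2 - C z * X + 1)) := by
        rw [map_add, map_mul, AdjoinRoot.mk_self, zero_mul, add_zero]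
    _ = Ae z ((p %ₘ (X ^ 2 - C z * X + 1)).coeff 0) ((p %ₘ (X ^ 2 - C z * X + 1)).coeff 1) := by
        conv_lhs => rw [hq]
        rw [map_add, map_mul, AdjoinRoot.mk_C, AdjoinRoot.mk_C, AdjoinRoot.mk_X]
        rw [ofz_eq, ofz_eq, rootz_eq]
        unfold Ae
        ring

lemma Ae_eq_zero {z a b : ℤ} (h : Ae z a b = 0) : a = 0 ∧ b = 0 := by
  have hmk : AdjoinRoot.mk (X ^ 2 - C z * X + 1 : ℤ[X]) (C b * X + C a) = 0 := by
    rw [map_add, map_mul, AdjoinRoot.mk_C, AdjoinRoot.mk_C, AdjoinRoot.mk_X]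
    rw [ofz_eq, ofz_eq, rootz_eq, ← h]
    unfold Ae
    ring
  rw [AdjoinRoot.mk_eq_zero] at hmk
  have hzero : (C b * X + C a : ℤ[X]) = 0 := by
    by_contra hne
    have h1 := degree_le_of_dvd hmk hne
    rw [fz_deg] at h1
    have h2 : (C b * X + C a : ℤ[X]).degree ≤ 1 := degree_linear_le
    have := h1.trans h2
    exact absurd this (by decide)
  have h0 := congrArg (fun q : ℤ[X] => q.coeff 0) hzero
  have h1 := congrArg (fun q : ℤ[X] => q.coeff 1) hzero
  simp only [coeff_add, coeff_C_mul, coeff_X_zero, coeff_C_zero, mul_zero, zero_add,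
    coeff_zero] at h0
  simp only [coeff_add, coeff_C_mul, coeff_X_one, mul_one, coeff_C, coeff_zero] at h1
  norm_num at h1
  exact ⟨h0, h1⟩

lemma Ae_inj {z a b c d : ℤ} (h : Ae z a b = Ae z c d) : a = c ∧ b = d := by
  have h0 : Ae z (a - c) (b - d) = 0 := by
    unfold Ae at h ⊢
    push_cast
    linear_combination h
  have := Ae_eq_zero h0
  omega

lemma isUnit_Ae (z a b : ℤ) (h : (a ^ 2 + a * b * z + b ^ 2).natAbs = 1) :
    IsUnit (Ae z a b) := by
  have hconj : Ae z a b * Ae z (a + b * z) (-b) = ((a ^ 2 + a * b * z + b ^ 2 : ℤ) : Rz z) := by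
    rw [Ae_mul, show a * (a + b * z) - b * (-b) = a ^ 2 + a * b * z + b ^ 2 from by ring,
      show a * (-b) + b * (a + b * z) + b * (-b) * z = 0 from by ring]
    simp [Ae]
  rcases Int.natAbs_eq_iff.mp h with h1 | h1
  · exact IsUnit.of_mul_eq_one (Ae z (a + b * z) (-b)) (by rw [hconj, h1]; simp)
  · exact IsUnit.of_mul_eq_one (-Ae z (a + b * z) (-b)) (by rw [mul_neg, hconj, h1]; simp)

/-- Descent: small values of the norm form are squares. -/
lemma lemA_aux (z : ℤ) (hz6 : 6 ≤ z) (m : ℤ) (hm : |m| ≤ z - 3) :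
    ∀ k : ℕ, ∀ a b : ℤ, (a ^ 2 + b ^ 2).natAbs = k → b ^ 2 ≤ a ^ 2 →
      a ^ 2 + a * b * z + b ^ 2 = m → ∃ c, m = c ^ 2 := by
  intro k
  induction k using Nat.strong_induction_on with
  | _ k ih =>
    intro a b hk hba hform
    by_cases hb0 : b = 0
    · subst hb0
      refine ⟨a, ?_⟩
      rw [← hform]; ring
    · have hb1 : 1 ≤ b ^ 2 := by
        have h1 := Int.one_le_abs hb0
        nlinarith [sq_abs b]
      have hmm := abs_le.mp hm
      have hform2 : (-b * z - a) ^ 2 + (-b * z - a) * b * z + b ^ 2 = m := by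
        linear_combination hform
      rcases lt_or_ge ((-b * z - a) ^ 2) (a ^ 2) with hlt | hge
      · have hmeas : ((-b * z - a) ^ 2 + b ^ 2).natAbs < k := by
          rw [← hk]
          exact Int.natAbs_lt_natAbs_of_nonneg_of_lt (by positivity) (by linarith)
        rcases le_total (b ^ 2) ((-b * z - a) ^ 2) with hod | hod
        · exact ih _ hmeas (-b * z - a) b rfl hod hform2
        · exact ih _ hmeas b (-b * z - a) (by rw [add_comm]) hod
            (by linear_combination hform2)
      · exfalso
        have h1 : (0 : ℤ) ≤ a ^ 2 - b ^ 2 := by linarith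
        have h2 : (0 : ℤ) ≤ (-b * z - a) ^ 2 - b ^ 2 := by linarith
        have key : (2 * b ^ 2 - m) ^ 2 - (b ^ 2 * z) ^ 2
            = (a ^ 2 - b ^ 2) * ((-b * z - a) ^ 2 - b ^ 2) := by
          linear_combination (4 * b ^ 2 - m - (a ^ 2 + a * b * z + b ^ 2)) * hform
        have hlt1 : 2 * b ^ 2 - m < b ^ 2 * z := by
          nlinarith [mul_nonneg (by linarith : (0 : ℤ) ≤ b ^ 2 - 1)
            (by linarith : (0 : ℤ) ≤ z - 2)]
        have hlt2 : -(b ^ 2 * z) < 2 * b ^ 2 - m := by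
          nlinarith [mul_nonneg (by linarith : (0 : ℤ) ≤ b ^ 2 - 1)
            (by linarith : (0 : ℤ) ≤ z + 2)]
        have hsq := sq_lt_sq' hlt2 hlt1
        nlinarith [mul_nonneg h1 h2]

lemma lemA (z : ℤ) (hz6 : 6 ≤ z) (m a b : ℤ) (hm : |m| ≤ z - 3)
    (hf : a ^ 2 + a * b * z + b ^ 2 = m) : ∃ c, m = c ^ 2 := by
  rcases le_total (b ^ 2) (a ^ 2) with h | h
  · exact lemA_aux z hz6 m hm _ a b rfl h hf
  · exact lemA_aux z hz6 m hm _ b a (by rw [add_comm]) h (by linear_combination hf)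

lemma main_lemma (z ε : ℤ) (hz : 6 ≤ |z|) (hε : ε = 1 ∨ ε = -1)
    (hnp : ¬ Prime (2 + ε * z)) :
    ∃ γ : Rz z, Irreducible γ ∧ ¬ Prime γ := by
  have hε2 : ε ^ 2 = 1 := by rcases hε with h | h <;> rw [h] <;> norm_num
  have hz' : 6 ≤ z ∨ z ≤ -6 := by
    rcases abs_cases z with ⟨h1, h2⟩ | ⟨h1, h2⟩ <;> rw [h1] at hz <;> omega
  set n : ℤ := 2 + ε * z with hn
  have hN : 4 ≤ n.natAbs := by
    rcases hε with rfl | rfl <;> rcases hz' with h | h <;> simp only [hn] <;> omega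
  have habs : (n.natAbs : ℤ) ≤ |z| + 2 := by
    rcases abs_cases z with ⟨h1, h2⟩ | ⟨h1, h2⟩ <;> rw [h1] <;>
      rcases hε with rfl | rfl <;> simp only [hn] <;> omega
  set p : ℕ := n.natAbs.minFac with hp
  have hnnp : ¬ n.natAbs.Prime := fun hpr => hnp (Int.prime_iff_natAbs_prime.mpr hpr)
  have hpp : p.Prime := Nat.minFac_prime (by omega)
  have hple : p ^ 2 ≤ n.natAbs := Nat.minFac_sq_le_self (by omega) hnnp
  have hdvdn : (p : ℤ) ∣ n := Int.dvd_natAbs.mp (Int.natCast_dvd_natCast.mpr (Nat.minFac_dvd _))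
  have hP2 : 2 ≤ (p : ℤ) := by exact_mod_cast hpp.two_le
  have hP2le : (p : ℤ) ^ 2 ≤ |z| + 2 := by
    have : ((p ^ 2 : ℕ) : ℤ) ≤ (n.natAbs : ℤ) := by exact_mod_cast hple
    push_cast at this
    rw [← Int.natCast_natAbs] at this
    linarith
  have hPle : (p : ℤ) ≤ |z| - 3 := by
    by_contra hcon
    push_neg at hcon
    have h1 : (|z| - 2) * (|z| - 2) ≤ (p : ℤ) * (p : ℤ) :=
      mul_le_mul (by linarith) (by linarith) (by linarith) (by linarith)
    nlinarith [abs_nonneg z, mul_nonneg (by linarith : (0:ℤ) ≤ |z| - 6) (abs_nonneg z)]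
  -- divisibility transfer
  have hnd : ∀ a b : ℤ, (((p : ℤ) : Rz z) ∣ Ae z a b) → ((p : ℤ) ∣ a ∧ (p : ℤ) ∣ b) := by
    intro a b ⟨v, hv⟩
    obtain ⟨c, d, rfl⟩ := Ae_surj z v
    rw [show (((p : ℤ)) : Rz z) = Ae z (p : ℤ) 0 from Ae_int z (p : ℤ), Ae_mul] at hv
    obtain ⟨h1, h2⟩ := Ae_inj hv
    exact ⟨⟨c, by linear_combination h1⟩, ⟨d, by linear_combination h2⟩⟩
  have hnu : ¬ IsUnit (((p : ℤ)) : Rz z) := by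
    intro hu
    obtain ⟨v, hv⟩ := isUnit_iff_exists_inv.mp hu
    obtain ⟨c, d, rfl⟩ := Ae_surj z v
    rw [show (((p : ℤ)) : Rz z) = Ae z (p : ℤ) 0 from Ae_int z (p : ℤ), Ae_mul,
      show (1 : Rz z) = Ae z 1 0 from by simp [Ae]] at hv
    obtain ⟨h1, h2⟩ := Ae_inj hv
    have hdvd1 : (p : ℤ) ∣ 1 := ⟨c, by linear_combination -h1⟩
    have := Int.le_of_dvd one_pos hdvd1
    omega
  have hfact : ((n : ℤ) : Rz z) = Ae z ε 1 * Ae z (ε + z) (-1) := by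
    rw [Ae_mul,
      show ε * (ε + z) - 1 * (-1) = n from by rw [hn]; linear_combination hε2,
      show ε * (-1) + 1 * (ε + z) + 1 * (-1) * z = 0 from by ring]
    exact Ae_int z n
  refine ⟨(((p : ℤ)) : Rz z), ⟨hnu, ?_⟩, ?_⟩
  · -- irreducible : factors are units
    intro x y hxy
    obtain ⟨a, b, rfl⟩ := Ae_surj z x
    obtain ⟨c, d, rfl⟩ := Ae_surj z y
    rw [show (((p : ℤ)) : Rz z) = Ae z (p : ℤ) 0 from Ae_int z (p : ℤ), Ae_mul] at hxy
    obtain ⟨E1, E2⟩ := Ae_inj hxy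
    set na : ℤ := a ^ 2 + a * b * z + b ^ 2 with hna
    set nc : ℤ := c ^ 2 + c * d * z + d ^ 2 with hnc
    have hNm : na * nc = (p : ℤ) ^ 2 := by
      have hid : na * nc = (a * c - b * d) ^ 2
          + (a * c - b * d) * (a * d + b * c + b * d * z) * z
          + (a * d + b * c + b * d * z) ^ 2 := by rw [hna, hnc]; ring
      rw [hid, ← E1, ← E2]; ring
    have hnat : na.natAbs * nc.natAbs = p ^ 2 := by
      have h0 : (na * nc).natAbs = ((p : ℤ) ^ 2).natAbs := by rw [hNm]
      rwa [Int.natAbs_mul, show ((p : ℤ) ^ 2).natAbs = p ^ 2 from by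
        rw [Int.natAbs_pow]; simp] at h0
    have hdvd2 : na.natAbs ∣ p ^ 2 := ⟨nc.natAbs, hnat.symm⟩
    obtain ⟨i, hi2, hival⟩ := (Nat.dvd_prime_pow hpp).mp hdvd2
    interval_cases i
    · left
      exact isUnit_Ae z a b (by simpa using hival)
    · -- |na| = p : impossible by descent lemma
      exfalso
      rw [pow_one] at hival
      have hnaabs : |na| = (p : ℤ) := by rw [← Int.natCast_natAbs, hival]
      have hsquare : ∃ c0 : ℤ, na = c0 ^ 2 := by
        rcases hz' with h6 | h6
        · have hzz : |z| = z := abs_of_nonneg (by linarith)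
          exact lemA z h6 na a b (by rw [hnaabs]; rw [hzz] at hPle; linarith)
            (by rw [hna])
        · have hzz : |z| = -z := abs_of_nonpos (by linarith)
          exact lemA (-z) (by linarith) na a (-b)
            (by rw [hnaabs]; rw [hzz] at hPle; linarith)
            (by rw [hna]; ring)
      obtain ⟨c0, hc0⟩ := hsquare
      have hcnat : c0.natAbs * c0.natAbs = p := by
        have : (c0 ^ 2).natAbs = p := by rw [← hc0]; exact hival
        rw [Int.natAbs_pow] at this
        rw [← this]; ring
      have hd := hpp.eq_one_or_self_of_dvd c0.natAbs ⟨c0.natAbs, hcnat.symm⟩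
      have h2 := hpp.two_le
      rcases hd with h | h
      · rw [h] at hcnat; omega
      · rw [h] at hcnat; nlinarith
    · right
      have hncone : nc.natAbs = 1 := by
        rw [hival] at hnat
        have hp0 : 0 < p ^ 2 := Nat.pow_pos hpp.pos
        exact Nat.eq_of_mul_eq_mul_left hp0 (by rw [hnat, mul_one])
      exact isUnit_Ae z c d hncone
  · -- not prime
    intro hpr
    have hdvdprod : (((p : ℤ)) : Rz z) ∣ Ae z ε 1 * Ae z (ε + z) (-1) := by
      rw [← hfact]
      obtain ⟨k, hk⟩ := hdvdn
      rw [hk]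
      push_cast
      exact Dvd.intro _ rfl
    rcases hpr.2.2 _ _ hdvdprod with hd1 | hd2
    · have := (hnd _ _ hd1).2
      have := Int.le_of_dvd one_pos this
      omega
    · have := (hnd _ _ hd2).2
      have h1 : (p : ℤ) ∣ 1 := (dvd_neg (α := ℤ)).mp this
      have := Int.le_of_dvd one_pos h1
      omega

theorem stmt16 (z : ℤ) (hz : 6 ≤ |z|)
    (h : ¬ (Prime (2 + z) ∧ Prime (2 - z))) :
    ∃ γ : Rz z, Irreducible γ ∧ ¬ Prime γ := by
  rcases not_and_or.mp h with h1 | h1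
  · exact main_lemma z 1 hz (Or.inl rfl) (by simpa using h1)
  · refine main_lemma z (-1) hz (Or.inr rfl) ?_
    rw [show (2 : ℤ) + (-1) * z = 2 - z from by ring]
    exact h1
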